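/- arXiv:1910.08824 — 7 statements merged into one kernel-verified Lean document; each statement's English description precedes it below -/
import Mathlib

section
/- Let H be a complex Hilbert space, let P ∈ B(H) be a positive operator, let Q ∈ B(H) be a positive self-adjoint operator with Q² = P, and let V₁, …, Vₙ ∈ B(H) satisfy ‖V₁x‖² + ⋯ + ‖Vₙx‖² ≤ ‖x‖² for all x ∈ H (as holds for a joint partial isometry). If the n-tuple (QV₁Q, …, QVₙQ) is jointly bounded below, then P is invertible in B(H). (This is Case 2 of Theorem 'basic': left invertibility of the spherical Aluthge transform forces invertibility of P.) -/
/-!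
The row `(V₁, …, Vₙ)` is a contraction, so `∑ ‖Q Vᵢ Q x‖² ≤ ‖Q‖² ‖Q x‖²`; joint boundedness
below of the transform therefore makes `Q` bounded below. Then `⟪P x, x⟫ = ‖Q x‖²` is bounded
below by a multiple of `‖x‖²`, and such a coercive operator on a Hilbert space is invertible.
-/

open ContinuousLinearMap

section

variable {𝕜 E : Type*} [RCLike 𝕜]

lemma sum_norm_sq_mul_apply_le [NormedAddCommGroup E] [NormedSpace 𝕜 E] {n : ℕ}
    (A B : E →L[𝕜] E) (V : Fin n → E →L[𝕜] E) (hV : ∀ x : E, ∑ i, ‖V i x‖ ^ 2 ≤ ‖x‖ ^ 2)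
    (x : E) : ∑ i, ‖(A * V i * B) x‖ ^ 2 ≤ (‖A‖ * ‖B x‖) ^ 2 :=
  calc ∑ i, ‖(A * V i * B) x‖ ^ 2
      ≤ ∑ i, (‖A‖ * ‖V i (B x)‖) ^ 2 :=
        Finset.sum_le_sum fun i _ => pow_le_pow_left₀ (norm_nonneg _) (A.le_opNorm _) 2
    _ = ‖A‖ ^ 2 * ∑ i, ‖V i (B x)‖ ^ 2 := by simp only [mul_pow, Finset.mul_sum]
    _ ≤ ‖A‖ ^ 2 * ‖B x‖ ^ 2 := mul_le_mul_of_nonneg_left (hV _) (sq_nonneg _)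
    _ = (‖A‖ * ‖B x‖) ^ 2 := (mul_pow _ _ _).symm

lemma isUnit_star_mul_self_of_le_norm [NormedAddCommGroup E] [InnerProductSpace 𝕜 E]
    [CompleteSpace E] (T : E →L[𝕜] E) {c : ℝ} (hc : 0 < c) (h : ∀ x, c * ‖x‖ ≤ ‖T x‖) :
    IsUnit (star T * T) := by
  refine isUnit_of_forall_le_norm_inner_map _ (c := ⟨c ^ 2, sq_nonneg c⟩)
    (NNReal.coe_pos.mp (pow_pos hc 2)) fun x => ?_
  have hinner : inner 𝕜 (star T (T x)) x = (‖T x‖ : 𝕜) ^ 2 := by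
    rw [star_eq_adjoint, adjoint_inner_left,
      inner_self_eq_norm_sq_to_K]
  change ‖x‖ ^ 2 * c ^ 2 ≤ ‖inner 𝕜 (star T (T x)) x‖
  rw [hinner, norm_pow, RCLike.norm_ofReal, abs_norm, mul_comm, ← mul_pow]
  exact pow_le_pow_left₀ (by positivity) (h x) 2

end

theorem isUnit_of_sphericalAluthge_bounded_below_general
    {H : Type*} [NormedAddCommGroup H] [InnerProductSpace ℂ H] [CompleteSpace H]
    {n : ℕ} (P Q : H →L[ℂ] H) (V : Fin n → H →L[ℂ] H)
    (hQ : Q.IsPositive) (hQ2 : Q * Q = P)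
    (hV : ∀ x : H, ∑ i, ‖V i x‖ ^ 2 ≤ ‖x‖ ^ 2)
    (hbb : ∃ c : ℝ, 0 < c ∧ ∀ x : H, c ^ 2 * ‖x‖ ^ 2 ≤ ∑ i, ‖(Q * V i * Q) x‖ ^ 2) :
    IsUnit P := by
  obtain ⟨c, hc, hbb⟩ := hbb
  -- `‖Q‖ + 1` rather than `‖Q‖`, which could vanish.
  have hQ_below : ∀ x, c / (‖Q‖ + 1) * ‖x‖ ≤ ‖Q x‖ := by
    intro x
    have hsq : (c * ‖x‖) ^ 2 ≤ (‖Q‖ * ‖Q x‖) ^ 2 :=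
      (mul_pow c ‖x‖ 2).trans_le ((hbb x).trans (sum_norm_sq_mul_apply_le Q Q V hV x))
    have hle : c * ‖x‖ ≤ ‖Q‖ * ‖Q x‖ := pow_le_pow_iff_left₀ (by positivity) (by positivity)
      two_ne_zero |>.mp hsq
    rw [div_mul_eq_mul_div, div_le_iff₀ (by positivity)]
    nlinarith [norm_nonneg (Q x)]
  have hP_eq : P = star Q * Q := by rw [hQ.isSelfAdjoint.star_eq, hQ2]
  rw [hP_eq]
  exact isUnit_star_mul_self_of_le_norm Q (by positivity) hQ_below

/-- Case 2 of Theorem `basic`: Let `P` be positive, `Q` positive with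
`Q² = P`, and `V₁, …, Vₙ` satisfy `∑ i, ‖Vᵢ x‖² ≤ ‖x‖²` for all `x`. If the tuple
`(QV₁Q, …, QVₙQ)` is jointly bounded below, then `P` is invertible in `B(H)`. -/
theorem isUnit_of_sphericalAluthge_bounded_below
    {H : Type*} [NormedAddCommGroup H] [InnerProductSpace ℂ H] [CompleteSpace H]
    {n : ℕ} (P Q : H →L[ℂ] H) (V : Fin n → H →L[ℂ] H)
    (hP : P.IsPositive) (hQ : Q.IsPositive) (hQ2 : Q * Q = P)
    (hV : ∀ x : H, ∑ i, ‖V i x‖ ^ 2 ≤ ‖x‖ ^ 2)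
    (hbb : ∃ c : ℝ, 0 < c ∧ ∀ x : H, c ^ 2 * ‖x‖ ^ 2 ≤ ∑ i, ‖(Q * V i * Q) x‖ ^ 2) :
    IsUnit P :=
  isUnit_of_sphericalAluthge_bounded_below_general P Q V hQ hQ2 hV hbb
end

section
/- Let R be a (not necessarily commutative) ring and let A = (A₁,…,Aₙ) and B = (B₁,…,Bₙ) be n-tuples of elements of R that criss-cross commute, i.e., AᵢBⱼAₖ = AₖBⱼAᵢ and BᵢAⱼBₖ = BₖAⱼBᵢ for all i, j, k. If the n-tuple AB := (A₁B₁, …, AₙBₙ) is commuting (its entries pairwise commute), then the n-tuple BA := (B₁A₁, …, BₙAₙ) is also commuting. -/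
/-- If the tuples `A` and `B` in a ring criss-cross commute
(`AᵢBⱼAₖ = AₖBⱼAᵢ` and `BᵢAⱼBₖ = BₖAⱼBᵢ` for all `i, j, k`) and the tuple
`AB := (A₁B₁, …, AₙBₙ)` is commuting, then `BA := (B₁A₁, …, BₙAₙ)` is commuting. -/
theorem BA_commuting_of_crissCross_of_AB_commuting
    {R : Type*} [Ring R] {n : ℕ} (A B : Fin n → R)
    (hABA : ∀ i j k, A i * B j * A k = A k * B j * A i)
    (hBAB : ∀ i j k, B i * A j * B k = B k * A j * B i)
    (hAB : ∀ i j, Commute (A i * B i) (A j * B j)) :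
    ∀ i j, Commute (B i * A i) (B j * A j) := by
  intro i j
  show B i * A i * (B j * A j) = B j * A j * (B i * A i)
  calc B i * A i * (B j * A j) = B i * A i * B j * A j := by noncomm_ring
    _ = B j * A i * B i * A j := by rw [hBAB]
    _ = B j * (A i * B i * A j) := by noncomm_ring
    _ = B j * (A j * B i * A i) := by rw [hABA]
    _ = B j * A j * (B i * A i) := by noncomm_ring
end

section
/- Let H be a complex Hilbert space, let P ∈ B(H) be a positive operator, let Q ∈ B(H) be a positive self-adjoint operator with Q² = P, and let V₁, …, Vₙ ∈ B(H) be such that the operators Tᵢ := VᵢP pairwise commute. Then the n-tuples A := (Q, Q, …, Q) and B := (V₁Q, …, VₙQ) criss-cross commute; in particular, for all i and k one has (VᵢQ)·Q·(VₖQ) = (VₖQ)·Q·(VᵢQ), i.e., Vᵢ P Vₖ Q = Vₖ P Vᵢ Q. -/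
/-!
Substituting `P = Q²`, the commutation `VᵢQ²VₖQ² = VₖQ²VᵢQ²` says that `S := VᵢQ²Vₖ - VₖQ²Vᵢ`
satisfies `SQ² = 0`. In a C⋆-algebra this already forces `SQ = 0` when `Q` is self-adjoint,
since `(SQ)(SQ)⋆ = SQ²S⋆ = 0`; and `SQ = 0` is the identity `VᵢPVₖQ = VₖPVᵢQ`.
-/

section CStarRing

variable {A : Type*} [NonUnitalNormedRing A] [StarRing A] [CStarRing A]

theorem IsSelfAdjoint.mul_eq_zero_of_mul_mul_self_eq_zero {q s : A} (hq : IsSelfAdjoint q)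
    (h : s * (q * q) = 0) : s * q = 0 := by
  rw [← CStarRing.mul_star_self_eq_zero_iff, star_mul, hq.star_eq, ← mul_assoc, mul_assoc s,
    h, zero_mul]

theorem IsSelfAdjoint.mul_mul_self_mul_comm_of_commute {q a b : A} (hq : IsSelfAdjoint q)
    (h : Commute (a * (q * q)) (b * (q * q))) :
    a * (q * q) * (b * q) = b * (q * q) * (a * q) := by
  have hs : (a * (q * q) * b - b * (q * q) * a) * (q * q) = 0 := by
    calc (a * (q * q) * b - b * (q * q) * a) * (q * q)
        = a * (q * q) * (b * (q * q)) - b * (q * q) * (a * (q * q)) := by noncomm_ring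
      _ = 0 := sub_eq_zero.mpr h.eq
  have hsq := hq.mul_eq_zero_of_mul_mul_self_eq_zero hs
  calc a * (q * q) * (b * q) = a * (q * q) * b * q := by noncomm_ring
    _ = b * (q * q) * a * q := by rw [← sub_eq_zero, ← sub_mul, hsq]
    _ = b * (q * q) * (a * q) := by noncomm_ring

end CStarRing

theorem crissCross_of_sphericalAluthge_general
    {H : Type*} [NormedAddCommGroup H] [InnerProductSpace ℂ H] [CompleteSpace H]
    {n : ℕ} (P Q : H →L[ℂ] H) (V : Fin n → H →L[ℂ] H)
    (hQ : Q.IsPositive) (hQ2 : Q * Q = P)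
    (hT : ∀ i j, Commute (V i * P) (V j * P)) :
    (∀ i j k : Fin n, Q * (V j * Q) * Q = Q * (V j * Q) * Q ∧
      (V i * Q) * Q * (V k * Q) = (V k * Q) * Q * (V i * Q)) ∧
    (∀ i k : Fin n, V i * P * (V k * Q) = V k * P * (V i * Q)) := by
  subst hQ2
  have key (i k : Fin n) : V i * (Q * Q) * (V k * Q) = V k * (Q * Q) * (V i * Q) :=
    hQ.isSelfAdjoint.mul_mul_self_mul_comm_of_commute (hT i k)
  refine ⟨fun i j k => ⟨rfl, ?_⟩, key⟩
  simpa only [mul_assoc] using key i k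

/-- If `P` is positive, `Q` is positive with `Q² = P`, and the operators
`Tᵢ := VᵢP` pairwise commute, then the tuples `A := (Q, …, Q)` and `B := (V₁Q, …, VₙQ)`
criss-cross commute; in particular `VᵢPVₖQ = VₖPVᵢQ` for all `i, k`. -/
theorem crissCross_of_sphericalAluthge
    {H : Type*} [NormedAddCommGroup H] [InnerProductSpace ℂ H] [CompleteSpace H]
    {n : ℕ} (P Q : H →L[ℂ] H) (V : Fin n → H →L[ℂ] H)
    (hP : P.IsPositive) (hQ : Q.IsPositive) (hQ2 : Q * Q = P)
    (hT : ∀ i j, Commute (V i * P) (V j * P)) :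
    (∀ i j k : Fin n, Q * (V j * Q) * Q = Q * (V j * Q) * Q ∧
      (V i * Q) * Q * (V k * Q) = (V k * Q) * Q * (V i * Q)) ∧
    (∀ i k : Fin n, V i * P * (V k * Q) = V k * P * (V i * Q)) :=
  crissCross_of_sphericalAluthge_general P Q V hQ hQ2 hT
end

section
/- Let H be a complex Hilbert space, let P ∈ B(H) be a positive operator, let Q ∈ B(H) be a positive self-adjoint operator with Q² = P, and let V₁, …, Vₙ ∈ B(H) be such that the operators Tᵢ := VᵢP pairwise commute. Then the spherical Aluthge transform (QV₁Q, QV₂Q, …, QVₙQ) is a commuting n-tuple: (QVᵢQ)(QVⱼQ) = (QVⱼQ)(QVᵢQ) for all i, j. -/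
/-- If `P` is positive, `Q` is positive with `Q² = P`, and the operators
`Tᵢ := VᵢP` pairwise commute, then the spherical Aluthge transform `(QV₁Q, …, QVₙQ)`
is a commuting tuple. -/
theorem sphericalAluthge_commuting
    {H : Type*} [NormedAddCommGroup H] [InnerProductSpace ℂ H] [CompleteSpace H]
    {n : ℕ} (P Q : H →L[ℂ] H) (V : Fin n → H →L[ℂ] H)
    (hP : P.IsPositive) (hQ : Q.IsPositive) (hQ2 : Q * Q = P)
    (hT : ∀ i j, Commute (V i * P) (V j * P)) :
    ∀ i j, (Q * V i * Q) * (Q * V j * Q) = (Q * V j * Q) * (Q * V i * Q) := by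
  intro i j
  have hQs : star Q = Q := hQ.isSelfAdjoint.star_eq
  set A : H →L[ℂ] H := V i * P * V j - V j * P * V i with hA
  have hAP : A * P = 0 := by
    have := hT i j
    simp only [Commute, SemiconjBy] at this
    rw [hA, sub_mul]
    rw [sub_eq_zero]
    calc V i * P * V j * P = V i * P * (V j * P) := by simp only [mul_assoc]
      _ = V j * P * (V i * P) := this
      _ = V j * P * V i * P := by simp only [mul_assoc]
  have hAQ : A * Q = 0 := by
    have h : (A * Q) * star (A * Q) = 0 := by
      rw [star_mul, hQs, show A * Q * (Q * star A) = A * (Q * Q) * star A by simp only [mul_assoc],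
        hQ2, hAP, zero_mul]
    exact (CStarRing.mul_star_self_eq_zero_iff _).mp h
  have key : V i * P * V j * Q = V j * P * V i * Q := by
    have := hAQ
    rw [hA, sub_mul, sub_eq_zero] at this
    exact this
  calc (Q * V i * Q) * (Q * V j * Q) = Q * (V i * P * V j * Q) := by rw [← hQ2]; simp only [mul_assoc]
    _ = Q * (V j * P * V i * Q) := by rw [key]
    _ = (Q * V j * Q) * (Q * V i * Q) := by rw [← hQ2]; simp only [mul_assoc]
end

section
/- Let H be a complex Hilbert space, let Q ∈ B(H) be a positive self-adjoint operator, set P := Q², and let V₁, …, Vₙ ∈ B(H) satisfy ‖V₁x‖² + ⋯ + ‖Vₙx‖² ≤ ‖x‖² for all x ∈ H. Suppose the operators Tᵢ := VᵢP pairwise commute and P² = T₁*T₁ + ⋯ + Tₙ*Tₙ. Then the n-tuple (T₁, …, Tₙ) is jointly bounded below if and only if the spherical Aluthge transform (QV₁Q, …, QVₙQ) is jointly bounded below. (This is the left-invertibility case of Theorem 7: T is Taylor invertible iff its spherical Aluthge transform is, at the first stage of the Koszul complex.) -/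
/-!
Since `P` is self-adjoint, `P² = ∑ Tᵢ* Tᵢ` says `∑ ‖Tᵢ x‖² = ‖P x‖²`, so `T` is jointly bounded
below iff `P = Q²` is bounded below, i.e. iff `Q` is. The same identity says that the `Vᵢ` act
jointly isometrically on the range of `P`. When `Q` is bounded below, `P` is injective and
self-adjoint, so this range is dense, the `Vᵢ` act jointly isometrically everywhere, and
`∑ ‖Q Vᵢ Q x‖² ≥ d² ∑ ‖Vᵢ Q x‖² = d² ‖Q x‖² ≥ d⁴ ‖x‖²`. Conversely
`∑ ‖Q Vᵢ Q x‖² ≤ ‖Q‖² ∑ ‖Vᵢ Q x‖² ≤ ‖Q‖² ‖Q x‖²`, so a lower bound for the spherical Aluthge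
transform yields one for `Q`.
-/

open ContinuousLinearMap

section BoundedBelow

variable {𝕜 E F G ι : Type*} [NontriviallyNormedField 𝕜]
  [NormedAddCommGroup E] [NormedSpace 𝕜 E] [NormedAddCommGroup F] [NormedSpace 𝕜 F]
  [NormedAddCommGroup G] [NormedSpace 𝕜 G] [Fintype ι]

def ContinuousLinearMap.IsBoundedBelow (A : E →L[𝕜] F) : Prop :=
  ∃ c : ℝ, 0 < c ∧ ∀ x, c * ‖x‖ ≤ ‖A x‖

def JointlyBoundedBelow (T : ι → E →L[𝕜] F) : Prop :=
  ∃ c : ℝ, 0 < c ∧ ∀ x, c ^ 2 * ‖x‖ ^ 2 ≤ ∑ i, ‖T i x‖ ^ 2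

namespace ContinuousLinearMap.IsBoundedBelow

variable {A : F →L[𝕜] G} {B : E →L[𝕜] F}

theorem injective (hB : B.IsBoundedBelow) : Function.Injective B := by
  obtain ⟨c, hc, hB⟩ := hB
  refine (injective_iff_map_eq_zero B).mpr fun x hx => norm_le_zero_iff.mp ?_
  have := hB x
  rw [hx, norm_zero] at this
  exact nonpos_of_mul_nonpos_right this hc

theorem comp (hA : A.IsBoundedBelow) (hB : B.IsBoundedBelow) : (A ∘L B).IsBoundedBelow := by
  obtain ⟨a, ha, hA⟩ := hA
  obtain ⟨b, hb, hB⟩ := hB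
  refine ⟨a * b, mul_pos ha hb, fun x => ?_⟩
  calc a * b * ‖x‖ = a * (b * ‖x‖) := mul_assoc _ _ _
    _ ≤ a * ‖B x‖ := mul_le_mul_of_nonneg_left (hB x) ha.le
    _ ≤ ‖A (B x)‖ := hA (B x)

theorem of_comp (h : (A ∘L B).IsBoundedBelow) : B.IsBoundedBelow := by
  obtain ⟨c, hc, h⟩ := h
  refine ⟨c / (‖A‖ + 1), by positivity, fun x => ?_⟩
  rw [div_mul_eq_mul_div, div_le_iff₀ (by positivity), mul_comm ‖B x‖]
  calc c * ‖x‖ ≤ ‖A (B x)‖ := h x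
    _ ≤ ‖A‖ * ‖B x‖ := A.le_opNorm (B x)
    _ ≤ (‖A‖ + 1) * ‖B x‖ := by gcongr; linarith

end ContinuousLinearMap.IsBoundedBelow

theorem jointlyBoundedBelow_iff_isBoundedBelow_of_sum_norm_sq_eq {T : ι → E →L[𝕜] F}
    {A : E →L[𝕜] G} (h : ∀ x, ∑ i, ‖T i x‖ ^ 2 = ‖A x‖ ^ 2) :
    JointlyBoundedBelow T ↔ A.IsBoundedBelow := by
  refine exists_congr fun c => and_congr_right fun hc => forall_congr' fun x => ?_
  rw [h, ← mul_pow, pow_le_pow_iff_left₀ (by positivity) (norm_nonneg _) two_ne_zero]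

namespace JointlyBoundedBelow

variable {T : ι → E →L[𝕜] F}

theorem comp_left {A : F →L[𝕜] G} (hT : JointlyBoundedBelow T) (hA : A.IsBoundedBelow) :
    JointlyBoundedBelow fun i => A ∘L T i := by
  obtain ⟨t, ht, hT⟩ := hT
  obtain ⟨a, ha, hA⟩ := hA
  refine ⟨a * t, mul_pos ha ht, fun x => ?_⟩
  calc (a * t) ^ 2 * ‖x‖ ^ 2 = a ^ 2 * (t ^ 2 * ‖x‖ ^ 2) := by ring
    _ ≤ a ^ 2 * ∑ i, ‖T i x‖ ^ 2 := by gcongr; exact hT x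
    _ = ∑ i, (a * ‖T i x‖) ^ 2 := by rw [Finset.mul_sum]; simp only [mul_pow]
    _ ≤ ∑ i, ‖A (T i x)‖ ^ 2 := by gcongr with i; exact hA (T i x)

theorem comp_right {B : G →L[𝕜] E} (hT : JointlyBoundedBelow T) (hB : B.IsBoundedBelow) :
    JointlyBoundedBelow fun i => T i ∘L B := by
  obtain ⟨t, ht, hT⟩ := hT
  obtain ⟨b, hb, hB⟩ := hB
  refine ⟨t * b, mul_pos ht hb, fun x => ?_⟩
  calc (t * b) ^ 2 * ‖x‖ ^ 2 = t ^ 2 * (b * ‖x‖) ^ 2 := by ring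
    _ ≤ t ^ 2 * ‖B x‖ ^ 2 := by gcongr; exact hB x
    _ ≤ ∑ i, ‖T i (B x)‖ ^ 2 := hT (B x)

theorem of_comp_left {A : F →L[𝕜] G} (h : JointlyBoundedBelow fun i => A ∘L T i) :
    JointlyBoundedBelow T := by
  obtain ⟨c, hc, h⟩ := h
  have hA : 0 < ‖A‖ + 1 := by positivity
  refine ⟨c / (‖A‖ + 1), div_pos hc hA, fun x => ?_⟩
  rw [div_pow, div_mul_eq_mul_div, div_le_iff₀ (by positivity), Finset.sum_mul]
  calc c ^ 2 * ‖x‖ ^ 2 ≤ ∑ i, ‖A (T i x)‖ ^ 2 := h x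
    _ ≤ ∑ i, ((‖A‖ + 1) * ‖T i x‖) ^ 2 := by
      gcongr with i
      exact (A.le_opNorm _).trans (by gcongr; linarith)
    _ = ∑ i, ‖T i x‖ ^ 2 * (‖A‖ + 1) ^ 2 := by simp only [mul_pow, mul_comm]

theorem isBoundedBelow_of_comp_right {B : G →L[𝕜] E}
    (h : JointlyBoundedBelow fun i => T i ∘L B) (hT : ∀ y, ∑ i, ‖T i y‖ ^ 2 ≤ ‖y‖ ^ 2) :
    B.IsBoundedBelow := by
  obtain ⟨c, hc, h⟩ := h
  refine ⟨c, hc, fun x => ?_⟩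
  rw [← pow_le_pow_iff_left₀ (by positivity) (norm_nonneg _) two_ne_zero, mul_pow]
  exact (h x).trans (hT (B x))

end JointlyBoundedBelow

theorem DenseRange.sum_norm_sq_apply_eq {T : ι → F →L[𝕜] G} {A : E →L[𝕜] F}
    (hA : DenseRange A) (h : ∀ x, ∑ i, ‖T i (A x)‖ ^ 2 = ‖A x‖ ^ 2) (y : F) :
    ∑ i, ‖T i y‖ ^ 2 = ‖y‖ ^ 2 :=
  congrFun (hA.equalizer (g := fun y => ∑ i, ‖T i y‖ ^ 2) (h := fun y => ‖y‖ ^ 2)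
    (by fun_prop) (by fun_prop) (funext h)) y

end BoundedBelow

section InnerProductSpace

variable {𝕜 E F G ι : Type*} [RCLike 𝕜]
  [NormedAddCommGroup E] [InnerProductSpace 𝕜 E] [CompleteSpace E]
  [NormedAddCommGroup F] [InnerProductSpace 𝕜 F] [CompleteSpace F]
  [NormedAddCommGroup G] [InnerProductSpace 𝕜 G] [CompleteSpace G] [Fintype ι]

theorem sum_norm_sq_apply_eq_of_sum_adjoint_comp_self_eq {T : ι → E →L[𝕜] F}
    {A : E →L[𝕜] G} (h : ∑ i, adjoint (T i) ∘L T i = adjoint A ∘L A) (x : E) :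
    ∑ i, ‖T i x‖ ^ 2 = ‖A x‖ ^ 2 := by
  simp only [apply_norm_sq_eq_inner_adjoint_left, ← h, sum_apply, sum_inner, map_sum]

theorem IsSelfAdjoint.denseRange_of_injective {A : E →L[𝕜] E} (hA : IsSelfAdjoint A)
    (hinj : Function.Injective A) : DenseRange A := by
  have hker : A.ker = ⊥ := LinearMap.ker_eq_bot.mpr hinj
  have hrange : A.rangeᗮ = ⊥ := by rw [orthogonal_range, hA.adjoint_eq, hker]
  rw [DenseRange, ← coe_coe, ← LinearMap.coe_range]
  exact Submodule.dense_iff_topologicalClosure_eq_top.mpr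
    (Submodule.topologicalClosure_eq_top_iff.mpr hrange)

end InnerProductSpace

theorem jointly_bounded_below_iff_sphericalAluthge_general
    {H : Type*} [NormedAddCommGroup H] [InnerProductSpace ℂ H] [CompleteSpace H]
    {n : ℕ} (Q : H →L[ℂ] H) (V : Fin n → H →L[ℂ] H)
    (hQ : Q.IsPositive)
    (hV : ∀ x : H, ∑ i, ‖V i x‖ ^ 2 ≤ ‖x‖ ^ 2)
    (hP2 : (Q * Q) * (Q * Q) =
      ∑ i, ContinuousLinearMap.adjoint (V i * (Q * Q)) * (V i * (Q * Q))) :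
    (∃ c : ℝ, 0 < c ∧ ∀ x : H, c ^ 2 * ‖x‖ ^ 2 ≤ ∑ i, ‖(V i * (Q * Q)) x‖ ^ 2) ↔
    (∃ c : ℝ, 0 < c ∧ ∀ x : H, c ^ 2 * ‖x‖ ^ 2 ≤ ∑ i, ‖(Q * V i * Q) x‖ ^ 2) := by
  have hP : IsSelfAdjoint (Q * Q) := by
    simpa only [hQ.isSelfAdjoint.star_eq] using IsSelfAdjoint.star_mul_self Q
  have hTP : ∀ x, ∑ i, ‖(V i * (Q * Q)) x‖ ^ 2 = ‖(Q * Q) x‖ ^ 2 :=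
    sum_norm_sq_apply_eq_of_sum_adjoint_comp_self_eq (by rw [hP.adjoint_eq]; exact hP2.symm)
  change JointlyBoundedBelow _ ↔ JointlyBoundedBelow _
  rw [jointlyBoundedBelow_iff_isBoundedBelow_of_sum_norm_sq_eq hTP]
  constructor
  · intro hQQ
    have hQb : Q.IsBoundedBelow := hQQ.of_comp
    have hViso : ∀ y, ∑ i, ‖V i y‖ ^ 2 = ‖y‖ ^ 2 :=
      (hP.denseRange_of_injective hQQ.injective).sum_norm_sq_apply_eq hTP
    have hVb : JointlyBoundedBelow V := ⟨1, one_pos, fun y => by rw [hViso, one_pow, one_mul]⟩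
    exact (hVb.comp_left hQb).comp_right hQb
  · intro h
    simp only [mul_assoc] at h
    have hQb : Q.IsBoundedBelow := h.of_comp_left.isBoundedBelow_of_comp_right hV
    exact hQb.comp hQb

/-- left-invertibility case of Theorem 7: With `Q` positive, `P := Q²`,
`∑ i, ‖Vᵢ x‖² ≤ ‖x‖²`, the operators `Tᵢ := VᵢP` pairwise commuting, and
`P² = ∑ i, Tᵢ* Tᵢ`, the tuple `(T₁, …, Tₙ)` is jointly bounded below iff the
spherical Aluthge transform `(QV₁Q, …, QVₙQ)` is jointly bounded below. -/
theorem jointly_bounded_below_iff_sphericalAluthge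
    {H : Type*} [NormedAddCommGroup H] [InnerProductSpace ℂ H] [CompleteSpace H]
    {n : ℕ} (Q : H →L[ℂ] H) (V : Fin n → H →L[ℂ] H)
    (hQ : Q.IsPositive)
    (hV : ∀ x : H, ∑ i, ‖V i x‖ ^ 2 ≤ ‖x‖ ^ 2)
    (hT : ∀ i j, Commute (V i * (Q * Q)) (V j * (Q * Q)))
    (hP2 : (Q * Q) * (Q * Q) =
      ∑ i, ContinuousLinearMap.adjoint (V i * (Q * Q)) * (V i * (Q * Q))) :
    (∃ c : ℝ, 0 < c ∧ ∀ x : H, c ^ 2 * ‖x‖ ^ 2 ≤ ∑ i, ‖(V i * (Q * Q)) x‖ ^ 2) ↔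
    (∃ c : ℝ, 0 < c ∧ ∀ x : H, c ^ 2 * ‖x‖ ^ 2 ≤ ∑ i, ‖(Q * V i * Q) x‖ ^ 2) :=
  jointly_bounded_below_iff_sphericalAluthge_general Q V hQ hV hP2
end

section
/- Let H be a complex Hilbert space, let Q ∈ B(H) be a positive self-adjoint operator, set P := Q², and let V₁, …, Vₙ ∈ B(H) satisfy ‖V₁x‖² + ⋯ + ‖Vₙx‖² ≤ ‖x‖² for all x ∈ H. Suppose the operators Tᵢ := VᵢP pairwise commute and P² = T₁*T₁ + ⋯ + Tₙ*Tₙ. If either the n-tuple (T₁, …, Tₙ) or the n-tuple (QV₁Q, …, QVₙQ) is jointly bounded below, then P is invertible in B(H). (Theorem 'basic': left invertibility of T or of its spherical Aluthge transform implies invertibility of P.) -/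
/-!
In both cases the contraction condition on `V` transfers the lower bound of the tuple to a
single operator: `∑ ‖Vᵢ P x‖² ≤ ‖P x‖²` and `∑ ‖Q Vᵢ Q x‖² ≤ ‖Q‖² ‖Q x‖²`, so `P` or `Q` is
bounded below. A self-adjoint (even normal) operator that is bounded below is invertible: its
range is closed, and dense because its orthogonal complement is the trivial kernel.
-/

open ContinuousLinearMap
open scoped NNReal

namespace ContinuousLinearMap

variable {𝕜 E : Type*} [RCLike 𝕜] [NormedAddCommGroup E] [InnerProductSpace 𝕜 E]

theorem _root_.IsStarNormal.isUnit_of_antilipschitz [CompleteSpace E] {T : E →L[𝕜] E}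
    (hT : IsStarNormal T) {K : ℝ≥0} (hK : AntilipschitzWith K T) : IsUnit T := by
  rw [isUnit_iff_bijective, bijective_iff_dense_range_and_antilipschitz]
  refine ⟨?_, K, hK⟩
  rw [← Submodule.orthogonal_orthogonal_eq_closure, hT.orthogonal_range,
    LinearMap.ker_eq_bot.mpr hK.injective, Submodule.bot_orthogonal_eq_top]

theorem antilipschitz_of_sq_norm_le {F : Type*} [NormedAddCommGroup F] [NormedSpace 𝕜 F]
    (A : E →L[𝕜] F) {c K : ℝ} (hc : 0 < c) (hK : 0 ≤ K)
    (h : ∀ x, c ^ 2 * ‖x‖ ^ 2 ≤ K ^ 2 * ‖A x‖ ^ 2) :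
    AntilipschitzWith (Real.toNNReal (K / c)) A := by
  refine A.antilipschitz_of_bound fun x ↦ ?_
  have hcx : c * ‖x‖ ≤ K * ‖A x‖ :=
    le_of_pow_le_pow_left₀ two_ne_zero (by positivity) (by simpa only [mul_pow] using h x)
  rw [Real.coe_toNNReal _ (by positivity), div_mul_eq_mul_div, le_div_iff₀ hc]
  linarith

theorem sum_sq_norm_mul_mul_apply_le {ι : Type*} (s : Finset ι) {V : ι → E →L[𝕜] E}
    (hV : ∀ x, ∑ i ∈ s, ‖V i x‖ ^ 2 ≤ ‖x‖ ^ 2)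
    (A B : E →L[𝕜] E) (x : E) : ∑ i ∈ s, ‖(B * V i * A) x‖ ^ 2 ≤ ‖B‖ ^ 2 * ‖A x‖ ^ 2 :=
  calc ∑ i ∈ s, ‖(B * V i * A) x‖ ^ 2
    _ ≤ ∑ i ∈ s, ‖B‖ ^ 2 * ‖V i (A x)‖ ^ 2 := by
      gcongr with i
      rw [← mul_pow]
      exact pow_le_pow_left₀ (norm_nonneg _) (B.le_opNorm _) 2
    _ ≤ ‖B‖ ^ 2 * ‖A x‖ ^ 2 := by
      rw [← Finset.mul_sum]
      exact mul_le_mul_of_nonneg_left (hV (A x)) (by positivity)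

end ContinuousLinearMap

theorem isUnit_of_jointly_bounded_below_or_sphericalAluthge_general
    {H : Type*} [NormedAddCommGroup H] [InnerProductSpace ℂ H] [CompleteSpace H]
    {n : ℕ} (Q : H →L[ℂ] H) (V : Fin n → H →L[ℂ] H)
    (hQ : Q.IsPositive)
    (hV : ∀ x : H, ∑ i, ‖V i x‖ ^ 2 ≤ ‖x‖ ^ 2)
    (hbb : (∃ c : ℝ, 0 < c ∧ ∀ x : H, c ^ 2 * ‖x‖ ^ 2 ≤ ∑ i, ‖(V i * (Q * Q)) x‖ ^ 2) ∨
      (∃ c : ℝ, 0 < c ∧ ∀ x : H, c ^ 2 * ‖x‖ ^ 2 ≤ ∑ i, ‖(Q * V i * Q) x‖ ^ 2)) :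
    IsUnit (Q * Q) := by
  have hQ_sa : IsSelfAdjoint Q := hQ.isSelfAdjoint
  rcases hbb with ⟨c, hc, hb⟩ | ⟨c, hc, hb⟩
  · have hP_sa : IsSelfAdjoint (Q * Q) := by
      simpa only [hQ_sa.star_eq] using IsSelfAdjoint.star_mul_self Q
    refine hP_sa.isStarNormal.isUnit_of_antilipschitz
      ((Q * Q).antilipschitz_of_sq_norm_le hc zero_le_one fun x ↦ ?_)
    rw [one_pow, one_mul]
    exact (hb x).trans (hV ((Q * Q) x))
  · have hQ_unit : IsUnit Q := hQ_sa.isStarNormal.isUnit_of_antilipschitz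
      (Q.antilipschitz_of_sq_norm_le hc (norm_nonneg Q) fun x ↦
        (hb x).trans (sum_sq_norm_mul_mul_apply_le _ hV Q Q x))
    exact hQ_unit.mul hQ_unit

/-- Theorem `basic`: With `Q` positive, `P := Q²`, `∑ i, ‖Vᵢ x‖² ≤ ‖x‖²`,
the operators `Tᵢ := VᵢP` pairwise commuting, and `P² = ∑ i, Tᵢ* Tᵢ`: if either
`(T₁, …, Tₙ)` or `(QV₁Q, …, QVₙQ)` is jointly bounded below, then `P` is invertible. -/
theorem isUnit_of_jointly_bounded_below_or_sphericalAluthge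
    {H : Type*} [NormedAddCommGroup H] [InnerProductSpace ℂ H] [CompleteSpace H]
    {n : ℕ} (Q : H →L[ℂ] H) (V : Fin n → H →L[ℂ] H)
    (hQ : Q.IsPositive)
    (hV : ∀ x : H, ∑ i, ‖V i x‖ ^ 2 ≤ ‖x‖ ^ 2)
    (hT : ∀ i j, Commute (V i * (Q * Q)) (V j * (Q * Q)))
    (hP2 : (Q * Q) * (Q * Q) =
      ∑ i, ContinuousLinearMap.adjoint (V i * (Q * Q)) * (V i * (Q * Q)))
    (hbb : (∃ c : ℝ, 0 < c ∧ ∀ x : H, c ^ 2 * ‖x‖ ^ 2 ≤ ∑ i, ‖(V i * (Q * Q)) x‖ ^ 2) ∨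
      (∃ c : ℝ, 0 < c ∧ ∀ x : H, c ^ 2 * ‖x‖ ^ 2 ≤ ∑ i, ‖(Q * V i * Q) x‖ ^ 2)) :
    IsUnit (Q * Q) :=
  isUnit_of_jointly_bounded_below_or_sphericalAluthge_general Q V hQ hV hbb
end

section
/- Let H = ℓ²(ℕ, ℂ), let S ∈ B(H) be the backward shift, i.e., (Sx)(n) = x(n+1) for all x ∈ H and n ∈ ℕ, and let P ∈ B(H) be the operator (Px)(0) = 0 and (Px)(n) = x(n) for n ≥ 1. Then: (a) P is self-adjoint, P² = P = S*S (so P = |S| is the modulus in the polar decomposition of S, and S = S∘P, making P∘S∘P the Aluthge transform of S); (b) S is surjective; (c) P∘S∘P is not surjective. In particular, surjectivity is not preserved by the Aluthge transform (Remark (iii): the right spectral systems are not invariant). -/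
/-!
`S*S` and `P` agree because both `⟪S x, S y⟫` and `⟪x, P y⟫` are the ℓ² inner product with
the `0`-th coordinate dropped. `S` is onto since the forward shift of an ℓᵖ sequence is again
in ℓᵖ, while every vector in the range of `P S P` vanishes at `0`, so `lp.single 2 0 1` is missed.
-/

open scoped ENNReal InnerProductSpace

theorem memℓp_nat_succ_iff {E : Type*} [NormedAddCommGroup E] {p : ℝ≥0∞} (hp : 0 < p.toReal)
    {f : ℕ → E} : Memℓp (fun n ↦ f (n + 1)) p ↔ Memℓp f p := by
  simp only [memℓp_gen_iff hp]
  exact summable_nat_add_iff (f := fun n ↦ ‖f n‖ ^ p.toReal) 1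

theorem lp.not_surjective_of_apply_zero_eq_zero {X E : Type*} [NormedAddCommGroup E]
    [Nontrivial E] {p : ℝ≥0∞} {f : X → lp (fun _ : ℕ ↦ E) p} (hf : ∀ x, f x 0 = 0) :
    ¬ Function.Surjective f := by
  obtain ⟨a, ha⟩ := exists_ne (0 : E)
  intro hsurj
  obtain ⟨x, hx⟩ := hsurj (lp.single p 0 a)
  exact ha (by simpa [hx] using hf x)

theorem lp.surjective_of_apply_eq_apply_succ {E : Type*} [NormedAddCommGroup E]
    {p : ℝ≥0∞} (hp : 0 < p.toReal) {S : lp (fun _ : ℕ ↦ E) p → lp (fun _ : ℕ ↦ E) p}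
    (hS : ∀ x n, S x n = x (n + 1)) : Function.Surjective S := by
  intro y
  let g : ℕ → E := fun n ↦ if n = 0 then 0 else y (n - 1)
  have hg : Memℓp g p := (memℓp_nat_succ_iff hp).mp (by simpa [g] using lp.memℓp y)
  exact ⟨⟨g, hg⟩, lp.ext <| funext fun n ↦ by simp [hS, g]⟩

section InnerProduct

variable {𝕜 E : Type*} [RCLike 𝕜] [NormedAddCommGroup E] [InnerProductSpace 𝕜 E]

theorem lp.inner_eq_tsum_succ_of_apply_zero_eq_zero {x y : lp (fun _ : ℕ ↦ E) 2}
    (hy : y 0 = 0) : ⟪x, y⟫_𝕜 = ∑' n, ⟪x (n + 1), y (n + 1)⟫_𝕜 := by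
  rw [lp.inner_eq_tsum, (lp.summable_inner (𝕜 := 𝕜) x y).tsum_eq_zero_add, hy, inner_zero_right,
    zero_add]

variable {S P : lp (fun _ : ℕ ↦ E) 2 →L[𝕜] lp (fun _ : ℕ ↦ E) 2}

theorem inner_apply_apply_eq_tsum_succ (hS : ∀ x n, S x n = x (n + 1))
    (x y : lp (fun _ : ℕ ↦ E) 2) : ⟪S x, S y⟫_𝕜 = ∑' n, ⟪x (n + 1), y (n + 1)⟫_𝕜 := by
  simp only [lp.inner_eq_tsum, hS]

theorem inner_apply_eq_tsum_succ (hP0 : ∀ x, P x 0 = 0)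
    (hP1 : ∀ x n, 1 ≤ n → P x n = x n) (x y : lp (fun _ : ℕ ↦ E) 2) :
    ⟪x, P y⟫_𝕜 = ∑' n, ⟪x (n + 1), y (n + 1)⟫_𝕜 := by
  rw [lp.inner_eq_tsum_succ_of_apply_zero_eq_zero (hP0 y)]
  simp only [hP1 y _ (Nat.le_add_left 1 _)]

theorem eq_adjoint_mul_self_of_apply_eq_apply_succ [CompleteSpace E] (hS : ∀ x n, S x n = x (n + 1))
    (hP0 : ∀ x, P x 0 = 0) (hP1 : ∀ x n, 1 ≤ n → P x n = x n) :
    P = ContinuousLinearMap.adjoint S * S :=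
  ContinuousLinearMap.ext fun y ↦ ext_inner_left 𝕜 fun x ↦ by
    rw [mul_apply_eq_comp, ContinuousLinearMap.adjoint_inner_right,
      inner_apply_apply_eq_tsum_succ hS, inner_apply_eq_tsum_succ hP0 hP1]

end InnerProduct

section Coordinates

variable {R E : Type*} [NormedRing R] [NormedAddCommGroup E] [Module R E] [IsBoundedSMul R E]
  {p : ℝ≥0∞} [Fact (1 ≤ p)] {S P : lp (fun _ : ℕ ↦ E) p →L[R] lp (fun _ : ℕ ↦ E) p}

theorem mul_self_eq_of_apply_zero_of_apply_pos (hP0 : ∀ x, P x 0 = 0)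
    (hP1 : ∀ x n, 1 ≤ n → P x n = x n) : P * P = P := by
  refine ContinuousLinearMap.ext fun x ↦ lp.ext <| funext fun n ↦ ?_
  rcases Nat.eq_zero_or_pos n with rfl | hn
  · simp only [mul_apply_eq_comp, hP0]
  · simp only [mul_apply_eq_comp, hP1 _ n hn]

theorem eq_mul_of_apply_eq_apply_succ (hS : ∀ x n, S x n = x (n + 1))
    (hP1 : ∀ x n, 1 ≤ n → P x n = x n) : S = S * P :=
  ContinuousLinearMap.ext fun x ↦ lp.ext <| funext fun n ↦ by
    rw [mul_apply_eq_comp, hS, hS, hP1 x (n + 1) (Nat.le_add_left 1 n)]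

end Coordinates

/-- On `H = ℓ²(ℕ, ℂ)`, let `S` be the backward shift (`(Sx)(n) = x(n+1)`)
and `P` the operator with `(Px)(0) = 0`, `(Px)(n) = x(n)` for `n ≥ 1`. Then
(a) `P` is self-adjoint, `P² = P = S*S` (so `P = |S|` and `S = S∘P`, making `P∘S∘P` the
Aluthge transform of `S`); (b) `S` is surjective; (c) `P∘S∘P` is not surjective. -/
theorem aluthge_backward_shift_not_surjective
    (S P : lp (fun _ : ℕ => ℂ) 2 →L[ℂ] lp (fun _ : ℕ => ℂ) 2)
    (hS : ∀ (x : lp (fun _ : ℕ => ℂ) 2) (n : ℕ), S x n = x (n + 1))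
    (hP0 : ∀ x : lp (fun _ : ℕ => ℂ) 2, P x 0 = 0)
    (hP1 : ∀ (x : lp (fun _ : ℕ => ℂ) 2) (n : ℕ), 1 ≤ n → P x n = x n) :
    (IsSelfAdjoint P ∧ P * P = P ∧ P = ContinuousLinearMap.adjoint S * S ∧ S = S * P) ∧
    Function.Surjective S ∧
    ¬ Function.Surjective (P * S * P) := by
  have hPSS : P = ContinuousLinearMap.adjoint S * S :=
    eq_adjoint_mul_self_of_apply_eq_apply_succ hS hP0 hP1
  have hPsa : IsSelfAdjoint P := by
    rw [hPSS, ← ContinuousLinearMap.star_eq_adjoint]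
    exact IsSelfAdjoint.star_mul_self S
  refine ⟨⟨hPsa, mul_self_eq_of_apply_zero_of_apply_pos hP0 hP1, hPSS,
    eq_mul_of_apply_eq_apply_succ hS hP1⟩, lp.surjective_of_apply_eq_apply_succ (by norm_num) hS,
    lp.not_surjective_of_apply_zero_eq_zero fun x ↦ ?_⟩
  simp only [mul_apply_eq_comp, hP0]
end
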